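/- arXiv:1409.4236 — 4 statements merged into one kernel-verified Lean document; each statement's English description precedes it below -/
import Mathlib

section
/- Let Ω ⊂ ℝ² be bounded and let L > 0 be such that Ω ⊂ B_L(z) for every z ∈ Ω. Then there exists a constant C > 0 such that for all y, z ∈ Ω with y ≠ z, ∫_Ω dx/(|x−y||x−z|) ≤ C(1 − log(|y−z|/L)). -/
/-!
Let `d = |y - z|` and `ε = d / 2`. Whichever of `y`, `z` is nearer to `x`, the other one is at
distance at least `ε` from `x`, so `1 / (|x - y| |x - z|) ≤ k(|x - y|) + k(|x - z|)` with the
truncated inverse square `k(r) = r⁻¹ min(ε⁻¹, r⁻¹)`. Since `Ω` lies in the balls of radius `L`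
about `y` and `z`, it remains to integrate the radial function `k` over a planar ball in polar
coordinates: `∫_{B_L} k(|x|) dx = 2 |B_1| ∫₀^L min(ε⁻¹, r⁻¹) dr = 2 |B_1| (1 + log (L / ε))`.
-/

open MeasureTheory Filter Metric

noncomputable section

abbrev Pt := EuclideanSpace ℝ (Fin 2)

open Set Real Module

def truncInvSq (ε r : ℝ) : ℝ := r⁻¹ * min ε⁻¹ r⁻¹

section Kernel

variable {ε : ℝ}

lemma truncInvSq_nonneg (hε : 0 ≤ ε) {r : ℝ} (hr : 0 ≤ r) : 0 ≤ truncInvSq ε r :=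
  mul_nonneg (inv_nonneg.2 hr) (le_min (inv_nonneg.2 hε) (inv_nonneg.2 hr))

lemma mul_truncInvSq {r : ℝ} (hr : r ≠ 0) : r * truncInvSq ε r = min ε⁻¹ r⁻¹ := by
  rw [truncInvSq, ← mul_assoc, mul_inv_cancel₀ hr, one_mul]

lemma one_div_mul_le_truncInvSq (hε : 0 < ε) {a b : ℝ} (ha : 0 ≤ a) (hab : a ≤ b)
    (hεb : ε ≤ b) : 1 / (a * b) ≤ truncInvSq ε a := by
  obtain rfl | ha := ha.eq_or_lt
  · simp [truncInvSq]
  rw [one_div, mul_inv, truncInvSq]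
  gcongr
  exact le_min (inv_anti₀ hε hεb) (inv_anti₀ ha hab)

lemma one_div_mul_le_truncInvSq_add (hε : 0 < ε) {a b : ℝ} (ha : 0 ≤ a) (hb : 0 ≤ b)
    (hab : 2 * ε ≤ a + b) : 1 / (a * b) ≤ truncInvSq ε a + truncInvSq ε b := by
  rcases le_total a b with h | h
  · exact (one_div_mul_le_truncInvSq hε ha h (by linarith)).trans
      (le_add_of_nonneg_right (truncInvSq_nonneg hε.le hb))
  · rw [mul_comm]
    exact (one_div_mul_le_truncInvSq hε hb h (by linarith)).trans
      (le_add_of_nonneg_left (truncInvSq_nonneg hε.le ha))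

lemma integral_Ioo_min_inv (hε : 0 < ε) {R : ℝ} (hεR : ε ≤ R) :
    ∫ r in Ioo 0 R, min ε⁻¹ r⁻¹ = 1 + log (R / ε) := by
  have h_const : EqOn (fun r : ℝ ↦ min ε⁻¹ r⁻¹) (fun _ ↦ ε⁻¹) (Ioc 0 ε) := fun r hr ↦
    min_eq_left (inv_anti₀ hr.1 hr.2)
  have h_inv : EqOn (fun r : ℝ ↦ min ε⁻¹ r⁻¹) (fun r ↦ r⁻¹) (Ioc ε R) := fun r hr ↦
    min_eq_right (inv_anti₀ hε hr.1.le)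
  have h0 : (0 : ℝ) ∉ uIcc ε R := fun h ↦ by
    rw [uIcc_of_le hεR] at h
    exact hε.not_ge h.1
  have h_int_inv : IntegrableOn (fun r : ℝ ↦ r⁻¹) (Ioc ε R) :=
    (intervalIntegral.intervalIntegrable_inv (fun r hr ↦ ne_of_mem_of_not_mem hr h0)
      continuousOn_id).1
  rw [← integral_Ioc_eq_integral_Ioo, ← Ioc_union_Ioc_eq_Ioc hε.le hεR,
    setIntegral_union (Ioc_disjoint_Ioc_of_le le_rfl) measurableSet_Ioc
      ((integrableOn_const measure_Ioc_lt_top.ne).congr_fun h_const.symm measurableSet_Ioc)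
      (h_int_inv.congr_fun h_inv.symm measurableSet_Ioc),
    setIntegral_congr_fun measurableSet_Ioc h_const, setIntegral_congr_fun measurableSet_Ioc h_inv,
    setIntegral_const, ← intervalIntegral.integral_of_le hεR, integral_inv h0]
  simp [hε.le, hε.ne']

end Kernel

section Translation

variable {E F : Type*} [NormedAddCommGroup E] [MeasurableSpace E] [BorelSpace E]
  (μ : Measure E) [μ.IsAddRightInvariant] [NormedAddCommGroup F]

lemma setIntegral_ball_fun_dist [NormedSpace ℝ F] (f : ℝ → F) (c : E) (R : ℝ) :
    ∫ x in ball c R, f (dist x c) ∂μ = ∫ x in ball 0 R, f ‖x‖ ∂μ := by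
  rw [← (measurePreserving_add_right μ c).setIntegral_preimage_emb
    (measurableEmbedding_addRight c), preimage_add_right_ball, sub_self]
  simp_rw [dist_add_self_left]

lemma integrableOn_ball_fun_dist_iff {f : ℝ → F} {c : E} {R : ℝ} :
    IntegrableOn (fun x ↦ f (dist x c)) (ball c R) μ ↔
      IntegrableOn (fun x ↦ f ‖x‖) (ball 0 R) μ := by
  rw [← (measurePreserving_add_right μ c).integrableOn_comp_preimage
    (measurableEmbedding_addRight c), preimage_add_right_ball, sub_self]
  simp_rw [Function.comp_def, dist_add_self_left]

end Translation

section Radial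

variable {E F : Type*} [NormedAddCommGroup E] [NormedSpace ℝ E] [FiniteDimensional ℝ E]
  [MeasurableSpace E] [BorelSpace E] (μ : Measure E) [μ.IsAddHaarMeasure]

lemma setIntegral_ball_fun_norm_addHaar [Nontrivial E] [NormedAddCommGroup F] [NormedSpace ℝ F]
    (f : ℝ → F) (R : ℝ) :
    ∫ x in ball 0 R, f ‖x‖ ∂μ =
      finrank ℝ E • μ.real (ball 0 1) • ∫ y in Ioo 0 R, y ^ (finrank ℝ E - 1) • f y := by
  have h_ind : (ball (0 : E) R).indicator (fun x ↦ f ‖x‖) = fun x ↦ (Iio R).indicator f ‖x‖ := by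
    ext x
    by_cases hx : ‖x‖ < R <;> simp [hx]
  rw [← integral_indicator measurableSet_ball, h_ind, integral_fun_norm_addHaar,
    ← Ioi_inter_Iio, ← setIntegral_indicator measurableSet_Iio]
  simp_rw [indicator_smul_apply]

variable {μ} {ε : ℝ}

lemma integrableOn_ball_truncInvSq (hE : finrank ℝ E = 2) (hε : 0 < ε) (c : E) (R : ℝ) :
    IntegrableOn (fun x ↦ truncInvSq ε (dist x c)) (ball c R) μ := by
  have : Nontrivial E := nontrivial_of_finrank_eq_succ hE
  rw [integrableOn_ball_fun_dist_iff, integrableOn_fun_norm_addHaar, hE]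
  refine (integrableOn_congr_fun (g := fun y ↦ min ε⁻¹ y⁻¹) (fun y hy ↦ ?_)
    measurableSet_Ioo).2
    (Measure.integrableOn_of_bounded (M := ε⁻¹) measure_Ioo_lt_top.ne (by fun_prop) ?_)
  · simpa using mul_truncInvSq (ε := ε) (ne_of_gt hy.1)
  · filter_upwards [ae_restrict_mem measurableSet_Ioo] with y hy
    rw [norm_of_nonneg (le_min (inv_nonneg.2 hε.le) (inv_nonneg.2 hy.1.le))]
    exact min_le_left _ _

lemma integral_ball_truncInvSq (hE : finrank ℝ E = 2) (hε : 0 < ε) {R : ℝ} (hεR : ε ≤ R)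
    (c : E) :
    ∫ x in ball c R, truncInvSq ε (dist x c) ∂μ = 2 * μ.real (ball 0 1) * (1 + log (R / ε)) := by
  have : Nontrivial E := nontrivial_of_finrank_eq_succ hE
  rw [setIntegral_ball_fun_dist, setIntegral_ball_fun_norm_addHaar, hE,
    ← integral_Ioo_min_inv hε hεR,
    setIntegral_congr_fun measurableSet_Ioo (g := fun y ↦ min ε⁻¹ y⁻¹)
      fun y hy ↦ by simpa using mul_truncInvSq (ε := ε) (ne_of_gt hy.1)]
  simp only [nsmul_eq_mul, smul_eq_mul, Nat.cast_ofNat, mul_assoc]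

lemma setIntegral_truncInvSq_le (hE : finrank ℝ E = 2) (hε : 0 < ε) {R : ℝ} (hεR : ε ≤ R)
    {Ω : Set E} {c : E} (hΩ : Ω ⊆ ball c R) :
    ∫ x in Ω, truncInvSq ε (dist x c) ∂μ ≤ 2 * μ.real (ball 0 1) * (1 + log (R / ε)) := by
  rw [← integral_ball_truncInvSq hE hε hεR c]
  refine setIntegral_mono_set (integrableOn_ball_truncInvSq hE hε c R) ?_ hΩ.eventuallyLE
  exact Eventually.of_forall fun x ↦ truncInvSq_nonneg hε.le dist_nonneg

theorem setIntegral_one_div_dist_mul_dist_le (hE : finrank ℝ E = 2) {Ω : Set E} {R : ℝ}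
    {y z : E} (hy : Ω ⊆ ball y R) (hz : Ω ⊆ ball z R) (hyz : y ≠ z) (hR : dist y z ≤ 2 * R) :
    ∫ x in Ω, 1 / (dist x y * dist x z) ∂μ ≤
      4 * μ.real (ball 0 1) * (1 + log (2 * R / dist y z)) := by
  set ε := dist y z / 2 with hε_def
  have hε : 0 < ε := half_pos (dist_pos.2 hyz)
  have hεR : ε ≤ R := by linarith
  have h_int (c : E) (hc : Ω ⊆ ball c R) : IntegrableOn (fun x ↦ truncInvSq ε (dist x c)) Ω μ :=
    (integrableOn_ball_truncInvSq hE hε c R).mono_set hc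
  have h_pointwise (x : E) :
      1 / (dist x y * dist x z) ≤ truncInvSq ε (dist x y) + truncInvSq ε (dist x z) :=
    one_div_mul_le_truncInvSq_add hε dist_nonneg dist_nonneg
      (by linarith [dist_triangle_left y z x])
  calc ∫ x in Ω, 1 / (dist x y * dist x z) ∂μ
      ≤ ∫ x in Ω, truncInvSq ε (dist x y) + truncInvSq ε (dist x z) ∂μ :=
        integral_mono_of_nonneg (Eventually.of_forall fun x ↦ by positivity)
          ((h_int y hy).add (h_int z hz)) (Eventually.of_forall h_pointwise)
    _ = ∫ x in Ω, truncInvSq ε (dist x y) ∂μ + ∫ x in Ω, truncInvSq ε (dist x z) ∂μ :=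
        integral_add (h_int y hy) (h_int z hz)
    _ ≤ 4 * μ.real (ball 0 1) * (1 + log (2 * R / dist y z)) := by
        have h := add_le_add (setIntegral_truncInvSq_le (μ := μ) hE hε hεR hy)
          (setIntegral_truncInvSq_le (μ := μ) hE hε hεR hz)
        rw [div_div_eq_mul_div, mul_comm R 2] at h
        linarith

end Radial

theorem stmt5_general (Ω : Set Pt) (L : ℝ) (hL : 0 < L) (hcover : ∀ z ∈ Ω, Ω ⊆ Metric.ball z L) :
    ∃ C > 0, ∀ y ∈ Ω, ∀ z ∈ Ω, y ≠ z →
      ∫ x in Ω, 1 / (dist x y * dist x z) ≤ C * (1 - Real.log (dist y z / L)) := by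
  have hV : 0 < volume.real (ball (0 : Pt) 1) :=
    ENNReal.toReal_pos (measure_ball_pos volume 0 one_pos).ne' measure_ball_lt_top.ne
  refine ⟨4 * volume.real (ball (0 : Pt) 1) * (1 + log 2), by positivity, fun y hy z hz hyz ↦ ?_⟩
  have hd : 0 < dist y z := dist_pos.2 hyz
  have hdL : dist y z < L := by simpa [dist_comm] using hcover y hy hz
  have h_log : 1 + log (2 * L / dist y z) ≤ (1 + log 2) * (1 - log (dist y z / L)) := by
    have h_neg : log (dist y z / L) ≤ 0 := log_nonpos (by positivity) ((div_le_one hL).2 hdL.le)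
    rw [mul_div_assoc, log_mul two_ne_zero (by positivity), ← inv_div, log_inv]
    nlinarith [log_nonneg one_le_two]
  calc ∫ x in Ω, 1 / (dist x y * dist x z)
      ≤ 4 * volume.real (ball (0 : Pt) 1) * (1 + log (2 * L / dist y z)) :=
        setIntegral_one_div_dist_mul_dist_le finrank_euclideanSpace_fin (hcover y hy)
          (hcover z hz) hyz (by linarith)
    _ ≤ 4 * volume.real (ball (0 : Pt) 1) * (1 + log 2) * (1 - log (dist y z / L)) := by
        rw [mul_assoc _ (1 + log 2)]
        gcongr

/-- logarithmic bound on the interaction integral `∫_Ω dx/(|x-y||x-z|)`. -/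
theorem stmt5 (Ω : Set Pt) (hΩo : IsOpen Ω) (hΩb : Bornology.IsBounded Ω)
    (L : ℝ) (hL : 0 < L) (hcover : ∀ z ∈ Ω, Ω ⊆ Metric.ball z L) :
    ∃ C > 0, ∀ y ∈ Ω, ∀ z ∈ Ω, y ≠ z →
      ∫ x in Ω, 1 / (dist x y * dist x z) ≤ C * (1 - Real.log (dist y z / L)) :=
  stmt5_general Ω L hL hcover
end
end

section
/- For y ∈ ℝ² with y ≠ 0 and for the integral over the ball B_{2|y|}(0) ⊂ ℝ² we have ∫_{B_{2|y|}(0)} dx / (|x| |x−y|) ≤ 20π. -/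
/-!
Write `a = ‖x‖`, `b = ‖x - y‖`. Since `a + b ≥ ‖y‖`, the identity
`1 / (a b) = (a + b)⁻¹ (a⁻¹ + b⁻¹)` gives `1 / (a b) ≤ ‖y‖⁻¹ (a⁻¹ + b⁻¹)`. In the plane, polar
coordinates give `∫_{B_ρ(c)} ‖x - c‖⁻¹ dx = 2πρ`, and `B_{2‖y‖}(0) ⊆ B_{3‖y‖}(y)`, so the integral
is at most `‖y‖⁻¹ (4π‖y‖ + 6π‖y‖) = 10π`.
-/

open MeasureTheory Filter Metric

noncomputable section

open Set Real Module

section Plane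

variable {E : Type*} [NormedAddCommGroup E] [InnerProductSpace ℝ E] [FiniteDimensional ℝ E]
  [MeasurableSpace E] [BorelSpace E]

/-- `t ^ (2 - 1)` is the radial density of polar coordinates in dimension `2`. -/
lemma eqOn_Ioi_pow_smul_indicator_Iio_inv {R : ℝ} :
    EqOn (fun t : ℝ ↦ t ^ (2 - 1) • (Iio R).indicator (·⁻¹) t) ((Ioo 0 R).indicator 1)
      (Ioi 0) := by
  intro t (ht : 0 < t)
  by_cases htR : t < R <;> simp [htR, ht, ht.ne']

lemma integrable_indicator_Iio_inv_norm (hE : finrank ℝ E = 2) (R : ℝ) :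
    Integrable (fun x : E ↦ (Iio R).indicator (·⁻¹) ‖x‖) := by
  have : Nontrivial E := nontrivial_of_finrank_eq_succ hE
  rw [integrable_fun_norm_addHaar, hE,
    integrableOn_congr_fun eqOn_Ioi_pow_smul_indicator_Iio_inv measurableSet_Ioi]
  exact ((integrable_indicator_iff measurableSet_Ioo).2
    (integrableOn_const (by simp))).integrableOn

lemma integral_indicator_Iio_inv_norm (hE : finrank ℝ E = 2) {R : ℝ} (hR : 0 ≤ R) :
    ∫ x : E, (Iio R).indicator (·⁻¹) ‖x‖ = 2 * π * R := by
  have : Nontrivial E := nontrivial_of_finrank_eq_succ hE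
  rw [integral_fun_norm_addHaar, hE,
    setIntegral_congr_fun measurableSet_Ioi eqOn_Ioi_pow_smul_indicator_Iio_inv,
    integral_indicator measurableSet_Ioo]
  simp [measureReal_def, InnerProductSpace.volume_ball_of_dim_even (k := 1) hE, pi_nonneg,
    inter_eq_left.2 Ioo_subset_Ioi_self, hR]
  ring

lemma integrableOn_ball_inv_norm_sub (hE : finrank ℝ E = 2) (c : E) (R : ℝ) :
    IntegrableOn (fun x ↦ ‖x - c‖⁻¹) (ball c R) := by
  rw [← integrable_indicator_iff measurableSet_ball]
  refine ((integrable_indicator_Iio_inv_norm hE R).comp_sub_right c).congr (.of_forall fun x ↦ ?_)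
  simp [indicator, dist_eq_norm]

lemma integral_ball_inv_norm_sub (hE : finrank ℝ E = 2) (c : E) {R : ℝ} (hR : 0 ≤ R) :
    ∫ x in ball c R, ‖x - c‖⁻¹ = 2 * π * R := by
  rw [← integral_indicator measurableSet_ball, ← integral_indicator_Iio_inv_norm hE hR,
    ← integral_sub_right_eq_self (fun x ↦ (Iio R).indicator (·⁻¹) ‖x‖) c]
  congr with x
  simp [indicator, dist_eq_norm]

lemma one_div_mul_le_inv_mul_inv_add_inv {a b r : ℝ} (hr : 0 < r) (ha : 0 ≤ a) (hb : 0 ≤ b)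
    (hab : r ≤ a + b) : 1 / (a * b) ≤ r⁻¹ * (a⁻¹ + b⁻¹) := by
  rcases ha.eq_or_lt with rfl | ha
  · simp only [zero_mul, div_zero]; positivity
  rcases hb.eq_or_lt with rfl | hb
  · simp only [mul_zero, div_zero]; positivity
  calc 1 / (a * b) = (a + b)⁻¹ * (a⁻¹ + b⁻¹) := by field_simp; ring
    _ ≤ r⁻¹ * (a⁻¹ + b⁻¹) := by gcongr

lemma integral_ball_one_div_norm_mul_norm_sub_le (hE : finrank ℝ E = 2) {y : E} (hy : y ≠ 0) :
    ∫ x in ball 0 (2 * ‖y‖), 1 / (‖x‖ * ‖x - y‖) ≤ 10 * π := by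
  set r := ‖y‖
  have hr : 0 < r := norm_pos_iff.2 hy
  have hball : ball (0 : E) (2 * r) ⊆ ball y (3 * r) :=
    ball_subset_ball' (by rw [dist_zero_left]; linarith)
  have hint₀ : IntegrableOn (fun x : E ↦ ‖x‖⁻¹) (ball 0 (2 * r)) := by
    simpa using integrableOn_ball_inv_norm_sub hE 0 (2 * r)
  have hint₁ : IntegrableOn (fun x ↦ ‖x - y‖⁻¹) (ball y (3 * r)) :=
    integrableOn_ball_inv_norm_sub hE y (3 * r)
  calc ∫ x in ball 0 (2 * r), 1 / (‖x‖ * ‖x - y‖)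
      ≤ ∫ x in ball 0 (2 * r), r⁻¹ * (‖x‖⁻¹ + ‖x - y‖⁻¹) := by
        refine integral_mono_of_nonneg (.of_forall fun x ↦ by positivity)
          ((hint₀.add (hint₁.mono_set hball)).const_mul _) (.of_forall fun x ↦ ?_)
        refine one_div_mul_le_inv_mul_inv_add_inv hr (norm_nonneg _) (norm_nonneg _) ?_
        simpa using norm_sub_le x (x - y)
    _ = r⁻¹ * ((∫ x in ball (0 : E) (2 * r), ‖x‖⁻¹) +
          ∫ x in ball 0 (2 * r), ‖x - y‖⁻¹) := by
        rw [integral_const_mul, integral_add hint₀ (hint₁.mono_set hball)]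
    _ ≤ r⁻¹ * (2 * π * (2 * r) + 2 * π * (3 * r)) := by
        gcongr
        · simpa using (integral_ball_inv_norm_sub hE 0 (by positivity : 0 ≤ 2 * r)).le
        · rw [← integral_ball_inv_norm_sub hE y (by positivity : 0 ≤ 3 * r)]
          exact setIntegral_mono_set hint₁ (.of_forall fun x ↦ by positivity) hball.eventuallyLE
    _ = 10 * π := by field_simp; ring

end Plane

/-- `∫_{B_{2|y|}(0)} dx/(|x||x-y|) ≤ 20π` for `y ≠ 0` in the plane. -/
theorem stmt6 (y : Pt) (hy : y ≠ 0) :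
    ∫ x in Metric.ball (0 : Pt) (2 * ‖y‖), 1 / (‖x‖ * ‖x - y‖) ≤ 20 * Real.pi := by
  have := integral_ball_one_div_norm_mul_norm_sub_le finrank_euclideanSpace_fin hy
  linarith [pi_pos]
end
end

section
/- Let μ ∈ P(Ω) and suppose (μ_n) is a sequence in P(Ω) with μ_n ⇀ μ narrowly, each μ_n of the form (1/n)Σδ_{z_i^n} such that the vertical marginal (π₂)#μ_n is supported on points with pairwise distance ≥ c n^{−1/2+γ} and each horizontal slip plane carries at most (1/c) n^{1/2+γ} atoms, for fixed −1/2 < γ < 1/2 and c > 0. Then the vertical marginal of the limit satisfies (π₂)#μ ≤ (1/c²) 𝓛¹ (absolutely continuous with density at most 1/c²). -/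
open MeasureTheory Filter Metric Set ENNReal
noncomputable section
open scoped Classical

/-!
An interval of length `r` meets at most `r / (c n^{-1/2+γ}) + 1` slip planes of `μ_n`, each
carrying mass at most `n^{-1/2+γ} / c`, so the strip `ℝ × (a, b)` has `μ_n`-mass at most
`(b - a) / c² + n^{-1/2+γ} / c`. The error term vanishes since `γ < 1/2`, and the portmanteau
theorem passes the bound to `μ` on open strips. A probability measure on `ℝ` dominated by
`K · length` on open intervals has a `K`-Lipschitz distribution function, hence is at most
`K 𝓛¹`.
-/

open Finset in
theorem Finset.card_le_div_add_one_of_separated (s : Finset ℝ) {a b δ : ℝ} (hab : a ≤ b)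
    (hδ : 0 < δ) (hs : ∀ x ∈ s, x ∈ Set.Icc a b)
    (hsep : ∀ x ∈ s, ∀ y ∈ s, x ≠ y → δ ≤ |x - y|) :
    (#s : ℝ) ≤ (b - a) / δ + 1 := by
  -- The balls of radius `δ / 2` about the points are disjoint and lie in `(a - δ/2, b + δ/2)`.
  have hdisj : (s : Set ℝ).PairwiseDisjoint fun x ↦ ball x (δ / 2) := fun x hx y hy hxy ↦
    ball_disjoint_ball (by rw [Real.dist_eq]; linarith [hsep x hx y hy hxy])
  have hsub : ⋃ x ∈ s, ball x (δ / 2) ⊆ Set.Ioo (a - δ / 2) (b + δ / 2) := by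
    refine iUnion₂_subset fun x hx ↦ ?_
    rw [Real.ball_eq_Ioo]
    exact Set.Ioo_subset_Ioo (by linarith [(hs x hx).1]) (by linarith [(hs x hx).2])
  have hvol : (#s : ℝ≥0∞) * ENNReal.ofReal δ ≤ ENNReal.ofReal (b - a + δ) := by
    have := measure_mono (μ := volume) hsub
    rw [measure_biUnion_finset hdisj fun _ _ ↦ measurableSet_ball, Real.volume_Ioo] at this
    simpa [Real.volume_ball, mul_div_cancel₀, sum_const, nsmul_eq_mul,
      show b + δ / 2 - (a - δ / 2) = b - a + δ by ring] using this
  rw [← ENNReal.ofReal_natCast, ← ENNReal.ofReal_mul (by positivity),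
    ENNReal.ofReal_le_ofReal_iff (by linarith)] at hvol
  rw [div_add_one hδ.ne', le_div_iff₀ hδ]
  linarith

open Finset in
theorem Finset.card_filter_mem_Icc_le_of_separated {ι : Type*} [Fintype ι] (w : ι → ℝ)
    {a b δ M : ℝ} (hab : a ≤ b) (hδ : 0 < δ) (hM : 0 ≤ M)
    (hsep : ∀ i j, w i ≠ w j → δ ≤ |w i - w j|)
    (hfiber : ∀ s, (#{i | w i = s} : ℝ) ≤ M) :
    (#{i | w i ∈ Set.Icc a b} : ℝ) ≤ ((b - a) / δ + 1) * M := by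
  set T : Finset ι := {i | w i ∈ Set.Icc a b}
  have hfiberT : (#T : ℝ) ≤ #(T.image w) * M := by
    rw [card_eq_sum_card_image w T]
    push_cast
    refine (sum_le_card_nsmul _ _ M fun v _ ↦ ?_).trans (nsmul_eq_mul _ _).le
    exact (Nat.cast_le.mpr (card_le_card (filter_subset_filter _ (subset_univ T)))).trans
      (hfiber v)
  refine hfiberT.trans (mul_le_mul_of_nonneg_right ?_ hM)
  refine (T.image w).card_le_div_add_one_of_separated hab hδ ?_ ?_
  · simp only [forall_mem_image]
    exact fun i hi ↦ (mem_filter.mp hi).2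
  · simp only [mem_image]
    rintro _ ⟨i, -, rfl⟩ _ ⟨j, -, rfl⟩ hij
    exact hsep i j hij

theorem StieltjesFunction.measure_le_smul_volume (F : StieltjesFunction ℝ) (K : NNReal)
    (hF : ∀ a b, a ≤ b → F b - F a ≤ K * (b - a)) :
    F.measure ≤ (K : ℝ≥0∞) • volume := by
  -- `x ↦ K x - F x` is again a Stieltjes function, and its measure makes up the difference.
  let G : StieltjesFunction ℝ :=
    { toFun := fun x ↦ K * x - F x
      mono' := fun a b hab ↦ by linarith [hF a b hab]
      right_continuous' := fun x ↦
        ((continuous_const.mul continuous_id).continuousWithinAt).sub (F.right_continuous x) }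
  have hFG : F + G = K • StieltjesFunction.id := by
    ext x
    show F x + (K * x - F x) = K * x
    ring
  calc F.measure ≤ F.measure + G.measure := Measure.le_add_right le_rfl
    _ = (K : ℝ≥0∞) • volume := by
      rw [← StieltjesFunction.measure_add, hFG, StieltjesFunction.measure_smul,
        ← Real.volume_eq_stieltjes_id, ENNReal.smul_def]

open Topology in
theorem MeasureTheory.le_liminf_measure_open_of_tendsto_integral {Ω ι : Type*} {L : Filter ι}
    [MeasurableSpace Ω] [TopologicalSpace Ω] [OpensMeasurableSpace Ω] [HasOuterApproxClosed Ω]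
    {μ : Measure Ω} [IsProbabilityMeasure μ] {μs : ι → Measure Ω}
    [∀ i, IsProbabilityMeasure (μs i)]
    (h : ∀ f : BoundedContinuousFunction Ω ℝ,
      Tendsto (fun i ↦ ∫ x, f x ∂μs i) L (𝓝 (∫ x, f x ∂μ)))
    {G : Set Ω} (hG : IsOpen G) :
    μ G ≤ L.liminf fun i ↦ μs i G :=
  ProbabilityMeasure.le_liminf_measure_open_of_tendsto (μ := ⟨μ, inferInstance⟩)
    (μs := fun i ↦ ⟨μs i, inferInstance⟩)
    (ProbabilityMeasure.tendsto_iff_forall_integral_tendsto.mpr h) hG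

namespace MeasureTheory.Measure

variable {α : Type*} [MeasurableSpace α]

theorem finsetSum_dirac_apply {ι : Type*} [Fintype ι] (z : ι → α) {s : Set α}
    (hs : MeasurableSet s) : (∑ i, dirac (z i)) s = (Finset.univ.filter (z · ∈ s)).card := by
  simp [dirac_apply' _ hs, indicator_apply, Finset.sum_boole]

theorem inv_smul_sum_dirac_apply {n : ℕ} (z : Fin n → α) {s : Set α} (hs : MeasurableSet s) :
    ((n : ℝ≥0∞)⁻¹ • ∑ i, dirac (z i)) s =
      ENNReal.ofReal ((Finset.univ.filter (z · ∈ s)).card / n) := by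
  rcases n.eq_zero_or_pos with rfl | hn
  · simp
  rw [smul_apply, finsetSum_dirac_apply z hs, smul_eq_mul, div_eq_inv_mul,
    ENNReal.ofReal_mul (by positivity), ENNReal.ofReal_inv_of_pos (by positivity),
    ENNReal.ofReal_natCast, ENNReal.ofReal_natCast]

theorem isProbabilityMeasure_inv_smul_sum_dirac {n : ℕ} (hn : n ≠ 0) (z : Fin n → α) :
    IsProbabilityMeasure ((n : ℝ≥0∞)⁻¹ • ∑ i, dirac (z i)) := by
  constructor
  rw [smul_apply, finsetSum_dirac_apply z MeasurableSet.univ]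
  simpa using ENNReal.inv_mul_cancel (by exact_mod_cast hn) (ENNReal.natCast_ne_top n)

open Topology ProbabilityTheory in
theorem le_smul_volume_of_measure_Ioo_le (ν : Measure ℝ) [IsProbabilityMeasure ν] (K : NNReal)
    (h : ∀ a b, a < b → ν (Ioo a b) ≤ ENNReal.ofReal (K * (b - a))) :
    ν ≤ (K : ℝ≥0∞) • volume := by
  rw [← measure_cdf ν]
  refine (cdf ν).measure_le_smul_volume K fun a b hab ↦ ?_
  have hIoc : ∀ b', b < b' → ν.real (Ioc a b) ≤ K * (b' - a) := fun b' hb' ↦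
    (measureReal_mono (Ioc_subset_Ioo_right hb')).trans
      (ENNReal.toReal_le_of_le_ofReal (mul_nonneg K.2 (by linarith)) (h a b' (by linarith)))
  have hlim : Tendsto (fun b' ↦ (K : ℝ) * (b' - a)) (𝓝[>] b) (𝓝 (K * (b - a))) :=
    ((continuous_const.mul (continuous_id.sub continuous_const)).tendsto b).mono_left
      nhdsWithin_le_nhds
  rw [cdf_eq_real, cdf_eq_real, ← Iic_union_Ioc_eq_Iic hab,
    measureReal_union (Iic_disjoint_Ioc le_rfl) measurableSet_Ioc, add_sub_cancel_left]
  exact ge_of_tendsto hlim (eventually_nhdsWithin_of_forall hIoc)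

open Finset in
theorem inv_smul_sum_dirac_preimage_Ioo_le {f : α → ℝ} (hf : Measurable f) {n : ℕ}
    (hn : 0 < n) (z : Fin n → α) {γ c a b : ℝ} (hc : 0 < c) (hab : a ≤ b)
    (hsep : ∀ i j, f (z i) ≠ f (z j) →
      c * (n : ℝ) ^ (-(1/2 : ℝ) + γ) ≤ |f (z i) - f (z j)|)
    (hcount : ∀ s, (#{i | f (z i) = s} : ℝ) ≤ 1 / c * (n : ℝ) ^ ((1/2 : ℝ) + γ)) :
    ((n : ℝ≥0∞)⁻¹ • ∑ i, dirac (z i)) (f ⁻¹' Ioo a b) ≤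
      ENNReal.ofReal ((b - a) / c ^ 2 + 1 / c * (n : ℝ) ^ (-(1/2 : ℝ) + γ)) := by
  rw [inv_smul_sum_dirac_apply z (hf measurableSet_Ioo)]
  refine ENNReal.ofReal_le_ofReal ?_
  have hnR : (0 : ℝ) < n := Nat.cast_pos.mpr hn
  set A := (n : ℝ) ^ (-(1/2 : ℝ) + γ)
  have hA : 0 < A := Real.rpow_pos_of_pos hnR _
  have hpow : (n : ℝ) ^ ((1/2 : ℝ) + γ) = n * A := by
    rw [show (1/2 : ℝ) + γ = 1 + (-(1/2) + γ) by ring, Real.rpow_add hnR, Real.rpow_one]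
  rw [hpow] at hcount
  have hIoo : (#{i | z i ∈ f ⁻¹' Ioo a b} : ℝ) ≤ #{i | f (z i) ∈ Icc a b} :=
    Nat.cast_le.mpr (card_le_card (monotone_filter_right _ fun _ _ h ↦ Ioo_subset_Icc_self h))
  have hIcc := card_filter_mem_Icc_le_of_separated (f ∘ z) hab (mul_pos hc hA) (by positivity)
    hsep hcount
  rw [div_le_iff₀ hnR]
  calc _ ≤ _ := hIoo.trans hIcc
    _ = _ := by field_simp

end MeasureTheory.Measure

open Topology in
theorem stmt14_general (γ c : ℝ) (hγ2 : γ < 1/2) (hc : 0 < c)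
    (z : (n : ℕ) → Fin n → Pt) (μs : ℕ → Measure Pt) (μ : Measure Pt)
    [IsProbabilityMeasure μ]
    (hμs : ∀ n, 1 ≤ n → μs n = (n : ℝ≥0∞)⁻¹ • ∑ i : Fin n, Measure.dirac (z n i))
    (hsep : ∀ n, 1 ≤ n → ∀ i j : Fin n, (z n i) 1 ≠ (z n j) 1 →
      c * (n : ℝ) ^ (-(1/2 : ℝ) + γ) ≤ |(z n i) 1 - (z n j) 1|)
    (hcount : ∀ n, 1 ≤ n → ∀ s : ℝ,
      ((Finset.univ.filter (fun i : Fin n => (z n i) 1 = s)).card : ℝ) ≤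
        (1 / c) * (n : ℝ) ^ ((1/2 : ℝ) + γ))
    (hconv : ∀ f : BoundedContinuousFunction Pt ℝ,
      Tendsto (fun n => ∫ x, f x ∂(μs n)) atTop (nhds (∫ x, f x ∂μ))) :
    μ.map (fun x : Pt => x 1) ≤ ENNReal.ofReal (1 / c ^ 2) • (volume : Measure ℝ) := by
  have hπ : Continuous fun x : Pt => x 1 := by fun_prop
  have := Measure.isProbabilityMeasure_map (μ := μ) hπ.aemeasurable
  have : ∀ n, IsProbabilityMeasure (μs (n + 1)) := fun n ↦
    hμs (n + 1) n.succ_pos ▸ Measure.isProbabilityMeasure_inv_smul_sum_dirac n.succ_ne_zero _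
  refine Measure.le_smul_volume_of_measure_Ioo_le _ _ fun a b hab ↦ ?_
  rw [Measure.map_apply hπ.measurable measurableSet_Ioo, Real.coe_toNNReal _ (by positivity)]
  set bound : ℕ → ℝ := fun n ↦
    (b - a) / c ^ 2 + 1 / c * ((n + 1 : ℕ) : ℝ) ^ (-(1/2 : ℝ) + γ)
  have hbound (n : ℕ) :
      μs (n + 1) ((fun x : Pt => x 1) ⁻¹' Ioo a b) ≤ ENNReal.ofReal (bound n) :=
    hμs (n + 1) n.succ_pos ▸ Measure.inv_smul_sum_dirac_preimage_Ioo_le hπ.measurable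
      n.succ_pos _ hc hab.le (hsep (n + 1) n.succ_pos) (hcount (n + 1) n.succ_pos)
  have hlim : Tendsto bound atTop (𝓝 ((b - a) / c ^ 2)) := by
    have h : Tendsto (fun n : ℕ ↦ ((n + 1 : ℕ) : ℝ) ^ (-(1/2 : ℝ) + γ)) atTop (𝓝 0) := by
      rw [show -(1/2 : ℝ) + γ = -(1/2 - γ) by ring]
      exact (tendsto_rpow_neg_atTop (by linarith)).comp
        (tendsto_natCast_atTop_atTop.comp (tendsto_add_atTop_nat 1))
    simpa [bound] using (h.const_mul (1 / c)).const_add ((b - a) / c ^ 2)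
  calc μ ((fun x : Pt => x 1) ⁻¹' Ioo a b)
      ≤ atTop.liminf fun n ↦ μs (n + 1) ((fun x : Pt => x 1) ⁻¹' Ioo a b) :=
        le_liminf_measure_open_of_tendsto_integral
          (fun f ↦ (hconv f).comp (tendsto_add_atTop_nat 1)) (isOpen_Ioo.preimage hπ)
    _ ≤ ENNReal.ofReal ((b - a) / c ^ 2) :=
        (liminf_le_liminf (Eventually.of_forall hbound)).trans_eq
          (ENNReal.tendsto_ofReal hlim).liminf_eq
    _ = ENNReal.ofReal (1 / c ^ 2 * (b - a)) := by ring_nf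

/-- if empirical measures `μ_n = (1/n) Σ δ_{z_i^n}` converge narrowly to `μ`,
their slip planes (distinct vertical coordinates) are separated by at least `c n^{-1/2+γ}`
and each slip plane carries at most `(1/c) n^{1/2+γ}` dislocations, then the vertical
marginal of `μ` is absolutely continuous with density at most `1/c²`:
`(π₂)#μ ≤ (1/c²) 𝓛¹`. -/
theorem stmt14 (Ω : Set Pt) (hΩo : IsOpen Ω) (hΩb : Bornology.IsBounded Ω)
    (γ c : ℝ) (hγ1 : -(1/2 : ℝ) < γ) (hγ2 : γ < 1/2) (hc : 0 < c)
    (z : (n : ℕ) → Fin n → Pt) (μs : ℕ → Measure Pt) (μ : Measure Pt)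
    [IsProbabilityMeasure μ]
    (hμs : ∀ n, 1 ≤ n → μs n = (n : ℝ≥0∞)⁻¹ • ∑ i : Fin n, Measure.dirac (z n i))
    (hsep : ∀ n, 1 ≤ n → ∀ i j : Fin n, (z n i) 1 ≠ (z n j) 1 →
      c * (n : ℝ) ^ (-(1/2 : ℝ) + γ) ≤ |(z n i) 1 - (z n j) 1|)
    (hcount : ∀ n, 1 ≤ n → ∀ s : ℝ,
      ((Finset.univ.filter (fun i : Fin n => (z n i) 1 = s)).card : ℝ) ≤
        (1 / c) * (n : ℝ) ^ ((1/2 : ℝ) + γ))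
    (hconv : ∀ f : BoundedContinuousFunction Pt ℝ,
      Tendsto (fun n => ∫ x, f x ∂(μs n)) atTop (nhds (∫ x, f x ∂μ))) :
    μ.map (fun x : Pt => x 1) ≤ ENNReal.ofReal (1 / c ^ 2) • (volume : Measure ℝ) :=
  stmt14_general γ c hγ2 hc z μs μ hμs hsep hcount hconv
end
end

section
/- Stirling-type estimate: if P_n = ⌊n^{1/2+γ}⌋ with −1/2 < γ < 1/2, then (1/n) Σ_{p=2}^{P_n} (1 − log((p−1)/(nL))) → 0 as n → ∞, for any fixed L > 0. -/
open Filter Real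

/-- Stirling-type estimate.  With `P_n = ⌊n^{1/2+γ}⌋`, `-1/2 < γ < 1/2` and
`L > 0` fixed, `(1/n) Σ_{p=2}^{P_n} (1 − log((p−1)/(nL))) → 0` as `n → ∞`. -/
theorem stmt15 (γ L : ℝ) (hγ1 : -(1/2 : ℝ) < γ) (hγ2 : γ < 1/2) (hL : 0 < L) :
    Tendsto
      (fun n : ℕ => (n : ℝ)⁻¹ *
        ∑ p ∈ Finset.Icc 2 (Nat.floor ((n : ℝ) ^ ((1/2 : ℝ) + γ))),
          (1 - Real.log (((p : ℝ) - 1) / ((n : ℝ) * L))))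
      atTop (nhds 0) := by
  have hneg : γ - 1/2 < 0 := by linarith
  -- the dominating function
  have h2 : Tendsto (fun x : ℝ => x ^ (γ - 1/2)) atTop (nhds 0) := by
    have := tendsto_rpow_neg_atTop (y := 1/2 - γ) (by linarith)
    simpa [neg_sub] using this
  have h1 : Tendsto (fun x : ℝ => Real.log x / x ^ ((1/2 : ℝ) - γ)) atTop (nhds 0) :=
    (isLittleO_log_rpow_atTop (by linarith)).tendsto_div_nhds_zero
  have h1' : Tendsto (fun x : ℝ => Real.log x * x ^ (γ - 1/2)) atTop (nhds 0) := by
    apply h1.congr'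
    filter_upwards [eventually_gt_atTop (0 : ℝ)] with x hx
    rw [div_eq_mul_inv, ← Real.rpow_neg hx.le, neg_sub]
  have hg : Tendsto (fun x : ℝ => x ^ (γ - 1/2) * (1 + Real.log x + Real.log L))
      atTop (nhds 0) := by
    have := (h2.add h1').add (h2.mul_const (Real.log L))
    simp only [add_zero, zero_add, zero_mul] at this
    apply this.congr
    intro x; ring
  have hgn : Tendsto (fun n : ℕ => ((n : ℝ)) ^ (γ - 1/2) * (1 + Real.log n + Real.log L))
      atTop (nhds 0) := hg.comp tendsto_natCast_atTop_atTop
  have h2n : Tendsto (fun n : ℕ => ((n : ℝ)) ^ (γ - 1/2)) atTop (nhds 0) :=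
    h2.comp tendsto_natCast_atTop_atTop
  refine tendsto_of_tendsto_of_tendsto_of_le_of_le' tendsto_const_nhds hgn ?_ ?_
  · -- eventual nonnegativity
    filter_upwards [eventually_ge_atTop 1, h2n.eventually_lt_const hL] with n hn1 hnL
    have hn0 : (0 : ℝ) < n := by exact_mod_cast hn1
    have hnL1 : (n : ℝ) ^ ((1/2 : ℝ) + γ) ≤ (n : ℝ) * L := by
      have : (n : ℝ) ^ ((1/2 : ℝ) + γ) = (n : ℝ) * (n : ℝ) ^ (γ - 1/2) := by
        have he : (1/2 : ℝ) + γ = 1 + (γ - 1/2) := by ring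
        rw [he, Real.rpow_add hn0, Real.rpow_one]
      rw [this]
      exact mul_le_mul_of_nonneg_left hnL.le hn0.le
    refine mul_nonneg (by positivity) (Finset.sum_nonneg fun p hp => ?_)
    simp only [Finset.mem_Icc] at hp
    have hp1 : (1 : ℝ) ≤ (p : ℝ) - 1 := by
      have : (2 : ℝ) ≤ p := by exact_mod_cast hp.1
      linarith
    have hlog : Real.log (((p : ℝ) - 1) / ((n : ℝ) * L)) ≤ 0 := by
      apply Real.log_nonpos
      · positivity
      · rw [div_le_one (by positivity)]
        calc ((p : ℝ) - 1) ≤ (p : ℝ) := by linarith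
          _ ≤ Nat.floor ((n : ℝ) ^ ((1/2 : ℝ) + γ)) := by exact_mod_cast hp.2
          _ ≤ (n : ℝ) ^ ((1/2 : ℝ) + γ) := Nat.floor_le (by positivity)
          _ ≤ (n : ℝ) * L := hnL1
    linarith
  · -- eventual upper bound
    have hL1 : Tendsto (fun n : ℕ => (n : ℝ) * L) atTop atTop :=
      (tendsto_natCast_atTop_atTop).atTop_mul_const hL
    filter_upwards [eventually_ge_atTop 1, hL1.eventually_ge_atTop 1] with n hn1 hnL1
    have hn0 : (0 : ℝ) < n := by exact_mod_cast hn1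
    set P := Nat.floor ((n : ℝ) ^ ((1/2 : ℝ) + γ)) with hP
    have hlogb : (0 : ℝ) ≤ 1 + Real.log ((n : ℝ) * L) := by
      have := Real.log_nonneg hnL1
      linarith
    have hsum : ∑ p ∈ Finset.Icc 2 P, (1 - Real.log (((p : ℝ) - 1) / ((n : ℝ) * L)))
        ≤ (P : ℝ) * (1 + Real.log ((n : ℝ) * L)) := by
      calc ∑ p ∈ Finset.Icc 2 P, (1 - Real.log (((p : ℝ) - 1) / ((n : ℝ) * L)))
          ≤ ∑ _p ∈ Finset.Icc 2 P, (1 + Real.log ((n : ℝ) * L)) := by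
            apply Finset.sum_le_sum
            intro p hp
            simp only [Finset.mem_Icc] at hp
            have hp1 : (1 : ℝ) ≤ (p : ℝ) - 1 := by
              have : (2 : ℝ) ≤ p := by exact_mod_cast hp.1
              linarith
            have : Real.log (((p : ℝ) - 1) / ((n : ℝ) * L))
                = Real.log ((p : ℝ) - 1) - Real.log ((n : ℝ) * L) :=
              Real.log_div (by linarith) (by positivity)
            have hlp : 0 ≤ Real.log ((p : ℝ) - 1) := Real.log_nonneg hp1
            linarith
        _ = ((Finset.Icc 2 P).card : ℝ) * (1 + Real.log ((n : ℝ) * L)) := by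
            rw [Finset.sum_const, nsmul_eq_mul]
        _ ≤ (P : ℝ) * (1 + Real.log ((n : ℝ) * L)) := by
            apply mul_le_mul_of_nonneg_right _ hlogb
            rw [Nat.card_Icc]
            exact_mod_cast Nat.sub_le P 1
    have hPle : (P : ℝ) ≤ (n : ℝ) ^ ((1/2 : ℝ) + γ) := Nat.floor_le (by positivity)
    calc (n : ℝ)⁻¹ * ∑ p ∈ Finset.Icc 2 P, (1 - Real.log (((p : ℝ) - 1) / ((n : ℝ) * L)))
        ≤ (n : ℝ)⁻¹ * ((n : ℝ) ^ ((1/2 : ℝ) + γ) * (1 + Real.log ((n : ℝ) * L))) := by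
          apply mul_le_mul_of_nonneg_left _ (by positivity)
          exact hsum.trans (mul_le_mul_of_nonneg_right hPle hlogb)
      _ = (n : ℝ) ^ (γ - 1/2) * (1 + Real.log n + Real.log L) := by
          rw [Real.log_mul (by positivity) hL.ne']
          have : (n : ℝ)⁻¹ * (n : ℝ) ^ ((1/2 : ℝ) + γ) = (n : ℝ) ^ (γ - 1/2) := by
            rw [← Real.rpow_neg_one, ← Real.rpow_add hn0]
            norm_num; ring_nf
          rw [← mul_assoc, this]; ring
end
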